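/- If u is a ρ,λ-Catalan word and v is a λ,μ-Catalan word, then the words uv and vu have the same effect on any state of the two-stacks-in-series machine on which both are applicable. -/

import Mathlib

namespace TwoStacks

/-- A state of the two-stacks-in-series machine: remaining input,
stack 1, stack 2 (tops at the head), and the output so far. -/
structure St where
  inp : List ℕ
  s1 : List ℕ
  s2 : List ℕ
  out : List ℕ
deriving DecidableEq

/-- The three moves. -/
inductive Mv
  | rho  -- input → stack 1
  | lam  -- stack 1 → stack 2
  | mu   -- stack 2 → output
deriving DecidableEq

/-- One move of the machine (`none` if the move is not applicable). -/
def step : Mv → St → Option St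
  | .rho, ⟨x :: xs, s1, s2, o⟩ => some ⟨xs, x :: s1, s2, o⟩
  | .lam, ⟨i, x :: xs, s2, o⟩ => some ⟨i, xs, x :: s2, o⟩
  | .mu,  ⟨i, s1, x :: xs, o⟩ => some ⟨i, s1, xs, o ++ [x]⟩
  | _, _ => none

/-- Run a word of moves on a state. -/
def run (w : List Mv) (s : St) : Option St :=
  w.foldlM (fun s m => step m s) s

/-- The list 1,2,…,n. -/
def idSeq (n : ℕ) : List ℕ := (List.range n).map (· + 1)

/-- The one-line notation p(1),…,p(n) (values in {1,…,n}) of a permutation. -/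
def permList {n : ℕ} (p : Equiv.Perm (Fin n)) : List ℕ :=
  List.ofFn fun i => (p i : ℕ) + 1

/-- p is achievable: from input 1,…,n some word of moves outputs p(1),…,p(n). -/
def Achievable {n : ℕ} (p : Equiv.Perm (Fin n)) : Prop :=
  ∃ w, run w ⟨idSeq n, [], [], []⟩ = some ⟨[], [], [], permList p⟩

/-- p is sortable: from input p(1),…,p(n) some word of moves outputs 1,…,n. -/
def Sortable {n : ℕ} (p : Equiv.Perm (Fin n)) : Prop :=
  ∃ w, run w ⟨permList p, [], [], []⟩ = some ⟨[], [], [], idSeq n⟩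

/-- A list of (distinct) naturals is achievable as an output. -/
def AchList (l : List ℕ) : Prop :=
  ∃ w, run w ⟨idSeq l.length, [], [], []⟩ = some ⟨[], [], [], l⟩

/-- Standardization (pattern) of a list with distinct entries:
each entry is replaced by its rank (1-based). -/
def std (l : List ℕ) : List ℕ :=
  l.map fun x => (l.filter (· ≤ x)).length

/-- An operation sequence of length 3n: n of each letter, and every
prefix has #ρ ≥ #λ ≥ #μ. -/
def OpSeq (n : ℕ) (w : List Mv) : Prop :=
  w.length = 3 * n ∧ w.count .rho = n ∧ w.count .lam = n ∧ w.count .mu = n ∧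
  ∀ u, u <+: w → u.count .mu ≤ u.count .lam ∧ u.count .lam ≤ u.count .rho

/-- An x,y-Catalan word: word over {x,y} with equally many x's and y's
in which every prefix has at least as many x's as y's. -/
def CatWord (x y : Mv) (w : List Mv) : Prop :=
  (∀ m ∈ w, m = x ∨ m = y) ∧ w.count x = w.count y ∧
  ∀ u, u <+: w → u.count y ≤ u.count x

/-- Two words have the same effect: applied to any state on which both
are applicable, they give the same resulting state. -/
def SameEffect (v v' : List Mv) : Prop :=
  ∀ s t t', run v s = some t → run v' s = some t' → t = t'

/-- Rank of a letter for the order ρ < λ < μ. -/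
def rk : Mv → ℕ
  | .rho => 0
  | .lam => 1
  | .mu => 2

/-- The order ρ < λ < μ on letters. -/
def mlt (a b : Mv) : Prop := rk a < rk b

/-- Lexicographic order on words induced by ρ < λ < μ. -/
def wordLt (v v' : List Mv) : Prop := List.Lex mlt v v'

/-- No entry is immediately followed by its successor. -/
def IncAvoid (l : List ℕ) : Prop :=
  ∀ j (h : j + 1 < l.length), l.get ⟨j + 1, h⟩ ≠ l.get ⟨j, by omega⟩ + 1


lemma run_nil (s : St) : run [] s = some s := rfl

lemma run_cons (m : Mv) (w : List Mv) (s : St) :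
    run (m :: w) s = (step m s).bind (run w) := by
  simp [run, List.foldlM]
  rfl

lemma run_append (w₁ w₂ : List Mv) (s : St) :
    run (w₁ ++ w₂) s = (run w₁ s).bind (run w₂) := by
  induction w₁ generalizing s with
  | nil => simp [run_nil]
  | cons m w ih =>
    rw [List.cons_append, run_cons, run_cons]
    cases step m s <;> simp [ih]

/-- Effect of a balanced-with-surplus ρ,λ word: it conserves stack 1 below
the surplus `e`, moves some prefix `p` of the input onto stack 2 (as `q`),
uniformly in the rest of the state. -/
lemma genU : ∀ (w : List Mv) (e inp s1 s2 out : List ℕ) (st : St),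
    (∀ m ∈ w, m = Mv.rho ∨ m = Mv.lam) →
    (∀ u, u <+: w → u.count .lam ≤ u.count .rho + e.length) →
    (w.count .lam = w.count .rho + e.length) →
    run w ⟨inp, e ++ s1, s2, out⟩ = some st →
    ∃ p q, inp = p ++ st.inp ∧ st.s1 = s1 ∧ st.s2 = q ++ s2 ∧ st.out = out ∧
      ∀ c s1' s2' out', run w ⟨p ++ c, e ++ s1', s2', out'⟩ =
        some ⟨c, s1', q ++ s2', out'⟩ := by
  intro w
  induction w with
  | nil =>
    intro e inp s1 s2 out st _ _ hcnt hrun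
    simp at hcnt
    have he : e = [] := List.eq_nil_of_length_eq_zero hcnt.symm
    subst he
    rw [run_nil, Option.some_inj] at hrun
    subst hrun
    exact ⟨[], [], rfl, rfl, rfl, rfl, fun c s1' s2' out' => rfl⟩
  | cons m w ih =>
    intro e inp s1 s2 out st hmem hpre hcnt hrun
    rcases hmem m (List.mem_cons_self) with hm | hm
    · -- m = rho
      subst hm
      cases inp with
      | nil => simp [run_cons, step] at hrun
      | cons x inp₀ =>
        rw [run_cons] at hrun
        have hstep : step Mv.rho ⟨x :: inp₀, e ++ s1, s2, out⟩ =
            some ⟨inp₀, x :: (e ++ s1), s2, out⟩ := rfl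
        rw [hstep, Option.bind_some] at hrun
        have hrun' : run w ⟨inp₀, (x :: e) ++ s1, s2, out⟩ = some st := hrun
        obtain ⟨p, q, h1, h2, h3, h4, h5⟩ := ih (x :: e) inp₀ s1 s2 out st
          (fun m hm => hmem m (List.mem_cons_of_mem _ hm))
          (fun u hu => by
            have := hpre (Mv.rho :: u) (List.cons_prefix_cons.mpr ⟨rfl, hu⟩)
            simp [List.count_cons] at this ⊢
            omega)
          (by
            have h1 := hcnt
            simp [List.count_cons] at h1 ⊢
            omega)
          hrun'
        refine ⟨x :: p, q, by simp [h1], h2, h3, h4, ?_⟩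
        intro c s1' s2' out'
        rw [List.cons_append, run_cons]
        have : step Mv.rho ⟨x :: (p ++ c), e ++ s1', s2', out'⟩ =
            some ⟨p ++ c, (x :: e) ++ s1', s2', out'⟩ := rfl
        rw [this, Option.bind_some]
        exact h5 c s1' s2' out'
    · -- m = lam
      subst hm
      have hel : 1 ≤ e.length := by
        have := hpre [Mv.lam] ⟨w, rfl⟩
        simpa using this
      cases e with
      | nil => simp at hel
      | cons y e₀ =>
        rw [run_cons] at hrun
        have hstep : step Mv.lam ⟨inp, (y :: e₀) ++ s1, s2, out⟩ =
            some ⟨inp, e₀ ++ s1, y :: s2, out⟩ := rfl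
        rw [hstep, Option.bind_some] at hrun
        obtain ⟨p, q, h1, h2, h3, h4, h5⟩ := ih e₀ inp s1 (y :: s2) out st
          (fun m hm => hmem m (List.mem_cons_of_mem _ hm))
          (fun u hu => by
            have := hpre (Mv.lam :: u) (List.cons_prefix_cons.mpr ⟨rfl, hu⟩)
            simp [List.count_cons] at this ⊢
            omega)
          (by
            have h1 := hcnt
            simp [List.count_cons] at h1 ⊢
            omega)
          hrun
        refine ⟨p, q ++ [y], h1, h2, by simp [h3], h4, ?_⟩
        intro c s1' s2' out'
        rw [run_cons]
        have : step Mv.lam ⟨p ++ c, (y :: e₀) ++ s1', s2', out'⟩ =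
            some ⟨p ++ c, e₀ ++ s1', y :: s2', out'⟩ := rfl
        rw [this, Option.bind_some, h5 c s1' (y :: s2') out']
        simp

/-- Effect of a balanced-with-surplus λ,μ word: it conserves stack 2 below
the surplus `e`, moves some prefix `p` of stack 1 to the output (as `q`),
uniformly in the rest of the state. -/
lemma genV : ∀ (w : List Mv) (e inp s1 s2 out : List ℕ) (st : St),
    (∀ m ∈ w, m = Mv.lam ∨ m = Mv.mu) →
    (∀ u, u <+: w → u.count .mu ≤ u.count .lam + e.length) →
    (w.count .mu = w.count .lam + e.length) →
    run w ⟨inp, s1, e ++ s2, out⟩ = some st →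
    ∃ p q, s1 = p ++ st.s1 ∧ st.inp = inp ∧ st.s2 = s2 ∧ st.out = out ++ q ∧
      ∀ c inp' s2' out', run w ⟨inp', p ++ c, e ++ s2', out'⟩ =
        some ⟨inp', c, s2', out' ++ q⟩ := by
  intro w
  induction w with
  | nil =>
    intro e inp s1 s2 out st _ _ hcnt hrun
    simp at hcnt
    have he : e = [] := List.eq_nil_of_length_eq_zero hcnt.symm
    subst he
    rw [run_nil, Option.some_inj] at hrun
    subst hrun
    exact ⟨[], [], rfl, rfl, rfl, by simp, fun c inp' s2' out' => by simp [run_nil]⟩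
  | cons m w ih =>
    intro e inp s1 s2 out st hmem hpre hcnt hrun
    rcases hmem m (List.mem_cons_self) with hm | hm
    · -- m = lam
      subst hm
      cases s1 with
      | nil => simp [run_cons, step] at hrun
      | cons x s1₀ =>
        rw [run_cons] at hrun
        have hstep : step Mv.lam ⟨inp, x :: s1₀, e ++ s2, out⟩ =
            some ⟨inp, s1₀, (x :: e) ++ s2, out⟩ := rfl
        rw [hstep, Option.bind_some] at hrun
        obtain ⟨p, q, h1, h2, h3, h4, h5⟩ := ih (x :: e) inp s1₀ s2 out st
          (fun m hm => hmem m (List.mem_cons_of_mem _ hm))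
          (fun u hu => by
            have := hpre (Mv.lam :: u) (List.cons_prefix_cons.mpr ⟨rfl, hu⟩)
            simp [List.count_cons] at this ⊢
            omega)
          (by
            have h1 := hcnt
            simp [List.count_cons] at h1 ⊢
            omega)
          hrun
        refine ⟨x :: p, q, by simp [h1], h2, h3, h4, ?_⟩
        intro c inp' s2' out'
        rw [run_cons]
        have : step Mv.lam ⟨inp', x :: (p ++ c), e ++ s2', out'⟩ =
            some ⟨inp', p ++ c, (x :: e) ++ s2', out'⟩ := rfl
        rw [List.cons_append, this, Option.bind_some]
        exact h5 c inp' s2' out'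
    · -- m = mu
      subst hm
      have hel : 1 ≤ e.length := by
        have := hpre [Mv.mu] ⟨w, rfl⟩
        simpa using this
      cases e with
      | nil => simp at hel
      | cons y e₀ =>
        rw [run_cons] at hrun
        have hstep : step Mv.mu ⟨inp, s1, (y :: e₀) ++ s2, out⟩ =
            some ⟨inp, s1, e₀ ++ s2, out ++ [y]⟩ := rfl
        rw [hstep, Option.bind_some] at hrun
        obtain ⟨p, q, h1, h2, h3, h4, h5⟩ := ih e₀ inp s1 s2 (out ++ [y]) st
          (fun m hm => hmem m (List.mem_cons_of_mem _ hm))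
          (fun u hu => by
            have := hpre (Mv.mu :: u) (List.cons_prefix_cons.mpr ⟨rfl, hu⟩)
            simp [List.count_cons] at this ⊢
            omega)
          (by
            have h1 := hcnt
            simp [List.count_cons] at h1 ⊢
            omega)
          hrun
        refine ⟨p, y :: q, h1, h2, h3, by simp [h4], ?_⟩
        intro c inp' s2' out'
        rw [run_cons]
        have : step Mv.mu ⟨inp', p ++ c, (y :: e₀) ++ s2', out'⟩ =
            some ⟨inp', p ++ c, e₀ ++ s2', out' ++ [y]⟩ := rfl
        rw [this, Option.bind_some, h5 c inp' s2' (out' ++ [y])]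
        simp

theorem catalan_words_commute (u v : List Mv)
    (hu : CatWord Mv.rho Mv.lam u) (hv : CatWord Mv.lam Mv.mu v) :
    SameEffect (u ++ v) (v ++ u) := by
  obtain ⟨hu1, hu2, hu3⟩ := hu
  obtain ⟨hv1, hv2, hv3⟩ := hv
  rintro ⟨inp, s1, s2, out⟩ t t' h1 h2
  rw [run_append] at h1 h2
  obtain ⟨s₁, hus, hvs⟩ := Option.bind_eq_some_iff.mp h1
  obtain ⟨s₂, hvs2, hus2⟩ := Option.bind_eq_some_iff.mp h2
  obtain ⟨pu, qu, hinp, hs1, hs2, hout, hUuni⟩ :=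
    genU u [] inp s1 s2 out s₁ hu1
      (fun w hw => by simpa using hu3 w hw) (by simpa using hu2.symm)
      (by simpa using hus)
  obtain ⟨pv, qv, hbs1, htinp, hts2, htout, hVuni⟩ :=
    genV v [] s₁.inp s₁.s1 s₁.s2 s₁.out t hv1
      (fun w hw => by simpa using hv3 w hw) (by simpa using hv2.symm)
      (by simpa using hvs)
  -- identify s₂
  have hv2' : run v ⟨inp, s1, s2, out⟩ = some ⟨inp, t.s1, s2, out ++ qv⟩ := by
    have := hVuni t.s1 inp s2 out
    rw [← hs1, hbs1]
    simpa using this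
  rw [hv2', Option.some_inj] at hvs2
  subst hvs2
  -- identify t'
  have hu2' : run u ⟨inp, t.s1, s2, out ++ qv⟩ =
      some ⟨s₁.inp, t.s1, qu ++ s2, out ++ qv⟩ := by
    have := hUuni s₁.inp t.s1 s2 (out ++ qv)
    rw [hinp]
    simpa using this
  rw [hu2', Option.some_inj] at hus2
  subst hus2
  -- identify t
  cases t with
  | mk ti t1 t2 tout =>
    simp only at htinp hts2 htout ⊢
    simp [htinp, hts2, hs2, htout, hout]

end TwoStacks
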